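/- arXiv:2309.07626 — 2 statements merged into one kernel-verified Lean document; each statement's English description precedes it below -/
import Mathlib

section
/- Let r ≥ 2 be an integer and let z₁,…,z_r be complex numbers with Re(z_k) > 0 for every k. Then the function t ↦ ∏_{k=1}^r (z_k + it)^{−1} is absolutely integrable on ℝ and ∫_ℝ ∏_{k=1}^r (z_k + it)^{−1} dt = 0. -/
/-!
Put `f w = ∏ₖ (zₖ + w)⁻¹`. It is holomorphic on a half-plane `Re w > -c`, and since it has at
least two factors it is bounded there by `C / (1 + (Im w)²)`, uniformly in `Re w`. By Cauchy's
theorem on the rectangles `[x, y] × [-T, T]`, whose horizontal sides contribute nothing as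
`T → ∞`, the integral of `f` along the vertical line `Re w = x` does not depend on `x`; by
dominated convergence it tends to `0` as `x → ∞`, so it vanishes on the imaginary axis too.
-/

open MeasureTheory Filter Complex Set Topology Interval

section VerticalLine

variable {E : Type*} [NormedAddCommGroup E] {f : ℂ → E} {a : ℝ} {g : ℝ → ℝ}

lemma integrable_comp_add_mul_I (hf : ContinuousOn f {w | a < w.re}) (hg : Integrable g)
    (hfg : ∀ w : ℂ, a < w.re → ‖f w‖ ≤ g w.im) {x : ℝ} (hx : a < x) :
    Integrable fun t : ℝ => f (x + t * I) := by
  have hre : ∀ t : ℝ, a < ((x : ℂ) + t * I).re := by simpa using hx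
  refine hg.mono' ?_ (ae_of_all _ fun t => by simpa using hfg _ (hre t))
  exact (hf.comp_continuous (by fun_prop) hre).aestronglyMeasurable

variable [NormedSpace ℂ E]

lemma tendsto_intervalIntegral_horizontal_zero (hfg : ∀ w : ℂ, a < w.re → ‖f w‖ ≤ g w.im)
    {l : Filter ℝ} (hg : Tendsto g l (𝓝 0)) {x y : ℝ} (hx : a < x) (hy : a < y) :
    Tendsto (fun T : ℝ => ∫ s in x..y, f (s + T * I)) l (𝓝 0) := by
  refine squeeze_zero_norm (fun T => intervalIntegral.norm_integral_le_of_norm_le_const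
    fun s hs => ?_) (by simpa using hg.mul_const |y - x|)
  have : a < s := (lt_min hx hy).trans_le (uIoc_subset_uIcc hs).1
  simpa using hfg (s + T * I) (by simpa using this)

theorem integral_comp_add_mul_I_eq (hf : DifferentiableOn ℂ f {w | a < w.re})
    (hg : Integrable g) (hg0 : Tendsto g (cocompact ℝ) (𝓝 0))
    (hfg : ∀ w : ℂ, a < w.re → ‖f w‖ ≤ g w.im) {x y : ℝ} (hx : a < x) (hy : a < y) :
    ∫ t : ℝ, f (x + t * I) = ∫ t : ℝ, f (y + t * I) := by
  have hrect : ∀ T : ℝ, (∫ s in x..y, f (s + (-T) * I)) - (∫ s in x..y, f (s + T * I)) +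
      I • (∫ t in -T..T, f (y + t * I)) - I • (∫ t in -T..T, f (x + t * I)) = 0 := by
    intro T
    have hsub : [[x, y]] ×ℂ [[-T, T]] ⊆ {w | a < w.re} := fun w hw =>
      (lt_min hx hy).trans_le (mem_reProdIm.1 hw).1.1
    simpa using integral_boundary_rect_eq_zero_of_differentiableOn f (x - T * I) (y + T * I)
      (hf.mono (by simpa using hsub))
  have hbot := (tendsto_intervalIntegral_horizontal_zero hfg
    (hg0.mono_left atBot_le_cocompact) hx hy).comp tendsto_neg_atTop_atBot
  have htop := tendsto_intervalIntegral_horizontal_zero hfg (hg0.mono_left atTop_le_cocompact) hx hy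
  have hvert : ∀ {u : ℝ}, a < u → Tendsto (fun T : ℝ => ∫ t in -T..T, f (u + t * I)) atTop
      (𝓝 (∫ t : ℝ, f (u + t * I))) := fun hu =>
    intervalIntegral_tendsto_integral (integrable_comp_add_mul_I hf.continuousOn hg hfg hu)
      tendsto_neg_atTop_atBot tendsto_id
  have hlim := ((hbot.sub htop).add ((hvert hy).const_smul I)).sub ((hvert hx).const_smul I)
  simp only [Function.comp_def, ofReal_neg, hrect, sub_zero, zero_add] at hlim
  have := tendsto_nhds_unique tendsto_const_nhds hlim
  rw [← smul_sub, eq_comm, smul_eq_zero, sub_eq_zero] at this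
  exact (this.resolve_left I_ne_zero).symm

theorem integral_comp_add_mul_I_eq_zero (hf : DifferentiableOn ℂ f {w | a < w.re})
    (hg : Integrable g) (hg0 : Tendsto g (cocompact ℝ) (𝓝 0))
    (hfg : ∀ w : ℂ, a < w.re → ‖f w‖ ≤ g w.im)
    (hf_lim : ∀ t : ℝ, Tendsto (fun x : ℝ => f (x + t * I)) atTop (𝓝 0)) {x : ℝ} (hx : a < x) :
    ∫ t : ℝ, f (x + t * I) = 0 := by
  have hre : ∀ y t : ℝ, a < y → a < ((y : ℂ) + t * I).re := fun y t hy => by simpa using hy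
  have hdecay : Tendsto (fun y : ℝ => ∫ t : ℝ, f (y + t * I)) atTop (𝓝 0) := by
    simpa using tendsto_integral_filter_of_dominated_convergence g
      ((eventually_gt_atTop a).mono fun y hy =>
        (hf.continuousOn.comp_continuous (by fun_prop) (hre y · hy)).aestronglyMeasurable)
      ((eventually_gt_atTop a).mono fun y hy =>
        ae_of_all _ fun t => by simpa using hfg _ (hre y t hy))
      hg (ae_of_all _ hf_lim)
  refine tendsto_nhds_unique (tendsto_const_nhds.congr' ?_) hdecay
  filter_upwards [eventually_gt_atTop a] with y hy
  exact integral_comp_add_mul_I_eq hf hg hg0 hfg hx hy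

end VerticalLine

lemma norm_inv_le_of_le_re {c : ℝ} (hc : 0 < c) {ζ : ℂ} (hζ : c ≤ ζ.re) :
    ‖ζ⁻¹‖ ≤ (1 + c⁻¹) * (1 + |ζ.im|)⁻¹ := by
  have hcζ : c ≤ ‖ζ‖ := hζ.trans (re_le_norm ζ)
  rw [norm_inv, ← div_eq_mul_inv, le_div_iff₀ (by positivity), inv_mul_le_iff₀ (hc.trans_le hcζ)]
  have : 1 ≤ c⁻¹ * ‖ζ‖ := by rwa [le_inv_mul_iff₀ hc, mul_one]
  nlinarith [abs_im_le_norm ζ]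

lemma inv_one_add_abs_add_le (b t : ℝ) : (1 + |b + t|)⁻¹ ≤ (1 + |b|) * (1 + |t|)⁻¹ := by
  rw [← div_eq_mul_inv, le_div_iff₀ (by positivity), inv_mul_le_iff₀ (by positivity)]
  have : |t| ≤ |b + t| + |b| := by simpa using abs_sub (b + t) b
  nlinarith [abs_nonneg b, abs_nonneg (b + t)]

lemma inv_one_add_abs_pow_le {n : ℕ} (hn : 2 ≤ n) (t : ℝ) :
    ((1 + |t|) ^ n)⁻¹ ≤ (1 + t ^ 2)⁻¹ := by
  calc ((1 + |t|) ^ n)⁻¹ ≤ ((1 + |t|) ^ 2)⁻¹ := by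
        gcongr; exact le_add_of_nonneg_right (abs_nonneg t)
    _ ≤ (1 + t ^ 2)⁻¹ := by gcongr; nlinarith [abs_nonneg t, sq_abs t]

lemma norm_prod_inv_add_le {ι : Type*} [Fintype ι] (hι : 2 ≤ Fintype.card ι) (z : ι → ℂ)
    {c : ℝ} (hc : 0 < c) {w : ℂ} (hw : ∀ k, c ≤ (z k + w).re) :
    ‖∏ k, (z k + w)⁻¹‖ ≤ (∏ k, (1 + c⁻¹) * (1 + |(z k).im|)) * (1 + w.im ^ 2)⁻¹ := by
  have hfactor : ∀ k, ‖(z k + w)⁻¹‖ ≤ (1 + c⁻¹) * (1 + |(z k).im|) * (1 + |w.im|)⁻¹ := fun k =>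
    calc ‖(z k + w)⁻¹‖ ≤ (1 + c⁻¹) * (1 + |(z k).im + w.im|)⁻¹ := by
          simpa using norm_inv_le_of_le_re hc (hw k)
      _ ≤ (1 + c⁻¹) * ((1 + |(z k).im|) * (1 + |w.im|)⁻¹) := by
          gcongr; exact inv_one_add_abs_add_le _ _
      _ = _ := by ring
  calc ‖∏ k, (z k + w)⁻¹‖ ≤ ∏ k, (1 + c⁻¹) * (1 + |(z k).im|) * (1 + |w.im|)⁻¹ := by
        rw [norm_prod]; exact Finset.prod_le_prod (fun k _ => norm_nonneg _) fun k _ => hfactor k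
    _ = (∏ k, (1 + c⁻¹) * (1 + |(z k).im|)) * ((1 + |w.im|) ^ Fintype.card ι)⁻¹ := by
        rw [Finset.prod_mul_distrib, Finset.prod_const, Finset.card_univ, inv_pow]
    _ ≤ _ := by gcongr ?_ * ?_; exact inv_one_add_abs_pow_le hι w.im

lemma tendsto_inv_one_add_sq_cocompact :
    Tendsto (fun t : ℝ => (1 + t ^ 2)⁻¹) (cocompact ℝ) (𝓝 0) :=
  (tendsto_inv_atTop_zero.comp (tendsto_atTop_add_const_left _ 1
    ((tendsto_pow_atTop two_ne_zero).comp tendsto_norm_cocompact_atTop))).congr fun t => by simp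

lemma tendsto_prod_inv_add_atTop {ι : Type*} [Fintype ι] [Nonempty ι] (z : ι → ℂ) (t : ℝ) :
    Tendsto (fun x : ℝ => ∏ k, (z k + (x + t * I))⁻¹) atTop (𝓝 0) := by
  have hfactor : ∀ k, Tendsto (fun x : ℝ => (z k + (x + t * I))⁻¹) atTop (𝓝 0) := by
    intro k
    refine squeeze_zero_norm' ?_
      (tendsto_inv_atTop_zero.comp (tendsto_atTop_add_const_left _ (z k).re tendsto_id))
    filter_upwards [eventually_gt_atTop (-(z k).re)] with x hx
    have hre : (z k + (x + t * I)).re = (z k).re + x := by simp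
    calc ‖(z k + (x + t * I))⁻¹‖ = ‖z k + (x + t * I)‖⁻¹ := norm_inv _
      _ ≤ (z k + (x + t * I)).re⁻¹ := inv_anti₀ (by linarith) (re_le_norm _)
      _ = ((z k).re + x)⁻¹ := by rw [hre]
  obtain ⟨k₀⟩ := ‹Nonempty ι›
  have h := tendsto_finsetProd Finset.univ fun k _ => hfactor k
  rwa [Finset.prod_eq_zero (Finset.mem_univ k₀) rfl] at h

/-- For `r ≥ 2` and complex numbers `z₁, …, z_r` with positive real part,
the function `t ↦ ∏ₖ (zₖ + it)⁻¹` is integrable on `ℝ` and its integral vanishes. -/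
theorem stmt_6 (r : ℕ) (hr : 2 ≤ r) (z : Fin r → ℂ) (hz : ∀ k, 0 < (z k).re) :
    Integrable (fun t : ℝ => ∏ k, (z k + (t : ℂ) * Complex.I)⁻¹) ∧
      ∫ t : ℝ, ∏ k, (z k + (t : ℂ) * Complex.I)⁻¹ = 0 := by
  have : Nonempty (Fin r) := ⟨⟨0, by omega⟩⟩
  obtain ⟨k₀, hk₀⟩ := Finite.exists_min fun k => (z k).re
  obtain ⟨c, hc, hcz⟩ : ∃ c > 0, ∀ k, 2 * c ≤ (z k).re :=
    ⟨(z k₀).re / 2, half_pos (hz k₀), fun k => by linarith [hk₀ k]⟩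
  have hre : ∀ w : ℂ, -c < w.re → ∀ k, c ≤ (z k + w).re := fun w hw k => by
    rw [add_re]; linarith [hcz k]
  have hf : DifferentiableOn ℂ (fun w => ∏ k, (z k + w)⁻¹) {w | -c < w.re} := fun w hw =>
    (DifferentiableAt.fun_finsetProd fun k _ =>
      ((differentiableAt_const _).add differentiableAt_id).inv
        (ne_of_gt (hc.trans_le (hre w hw k)) ∘ congrArg re)).differentiableWithinAt
  set L := ∏ k, (1 + c⁻¹) * (1 + |(z k).im|)
  have hfg : ∀ w : ℂ, -c < w.re → ‖∏ k, (z k + w)⁻¹‖ ≤ L * (1 + w.im ^ 2)⁻¹ := fun w hw =>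
    norm_prod_inv_add_le (by simpa using hr) z hc (hre w hw)
  have hg : Integrable fun t : ℝ => L * (1 + t ^ 2)⁻¹ := integrable_inv_one_add_sq.const_mul L
  have hg0 : Tendsto (fun t : ℝ => L * (1 + t ^ 2)⁻¹) (cocompact ℝ) (𝓝 0) :=
    mul_zero L ▸ tendsto_inv_one_add_sq_cocompact.const_mul L
  have hc0 : -c < (0 : ℝ) := neg_lt_zero.2 hc
  have hint := integrable_comp_add_mul_I hf.continuousOn hg hfg hc0
  have hzero := integral_comp_add_mul_I_eq_zero hf hg hg0 hfg (tendsto_prod_inv_add_atTop z) hc0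
  simp only [ofReal_zero, zero_add] at hint hzero
  exact ⟨hint, hzero⟩
end

section
/- Let ε > 0, let k ≥ 0 be an integer, and let (c_B)_{B≥0} be a sequence of positive reals. There is a constant C > 0, depending only on ε, k, and finitely many of the c_B, with the following property. Let M, A, h, q, y be positive integers with h ≤ M^{1−ε}/(A q), and let w : ℝ → ℂ be a smooth function supported in [1, 10] with sup_ℝ |w^{(B)}| ≤ c_B · A^B for every integer B ≥ 0. Set ρ := #{ n ∈ ℤ/(hq)ℤ : h ∣ n and n ≡ y (mod q) } / (hq). Then |∑_{m ∈ ℤ} w(m/M)·( 1_{h ∣ m and m ≡ y (mod q)} − ρ )| ≤ C · M^{−k}. -/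
open MeasureTheory Filter Set Asymptotics
open scoped Real Topology FourierTransform

noncomputable def kapSeq : ℤ → ℝ := fun n => if n = 0 then (0:ℝ) else 1 / (n:ℝ)^2

lemma kapSeq_summable : Summable kapSeq := by
  have h : Summable (fun n : ℤ => 1 / (n:ℝ)^2) := Real.summable_one_div_int_pow.mpr one_lt_two
  exact h.congr (fun n => by by_cases hn : n = 0 <;> simp [kapSeq, hn])

lemma kapSeq_nonneg (n : ℤ) : 0 ≤ kapSeq n := by
  by_cases hn : n = 0 <;> simp [kapSeq, hn] <;> positivity

noncomputable def kap : ℝ := ∑' n : ℤ, kapSeq n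

lemma kap_nonneg : 0 ≤ kap := tsum_nonneg kapSeq_nonneg

section aux
variable {f : ℝ → ℂ}

lemma hcs_iter (hs : HasCompactSupport f) (n : ℕ) :
    HasCompactSupport (iteratedDeriv n f) := by
  induction n with
  | zero => simpa using hs
  | succ n ih => rw [iteratedDeriv_succ]; exact ih.deriv

lemma integ_iter (hf : ContDiff ℝ (⊤ : ℕ∞) f) (hs : HasCompactSupport f) (n : ℕ) :
    Integrable (iteratedDeriv n f) := by
  exact (hf.continuous_iteratedDeriv n (by exact_mod_cast le_top)).integrable_of_hasCompactSupport (hcs_iter hs n)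

lemma fourier_decay (hf : ContDiff ℝ (⊤ : ℕ∞) f) (hs : HasCompactSupport f) (B : ℕ) {ξ : ℝ}
    (hξ : ξ ≠ 0) :
    ‖𝓕 f ξ‖ ≤ (∫ x, ‖iteratedDeriv B f x‖) / (2 * π * |ξ|) ^ B := by
  have key := Real.fourier_iteratedDeriv (N := (⊤ : ℕ∞)) (hf.of_le (by simp))
    (fun n _ => integ_iter hf hs n) (le_top : (B:ℕ∞) ≤ ⊤)
  have h1 : ‖𝓕 (iteratedDeriv B f) ξ‖ ≤ ∫ x, ‖iteratedDeriv B f x‖ :=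
    VectorFourier.norm_fourierIntegral_le_integral_norm _ _ _ _ _
  rw [key] at h1
  have h2 : ‖((2 * π * Complex.I * ξ) ^ B • 𝓕 f ξ : ℂ)‖ = (2 * π * |ξ|) ^ B * ‖𝓕 f ξ‖ := by
    rw [norm_smul, norm_pow]
    congr 2
    simp only [norm_mul, Complex.norm_real, Real.norm_eq_abs, Complex.norm_I,
      Complex.norm_ofNat, abs_of_nonneg Real.pi_pos.le]
    ring
  rw [h2] at h1
  rw [le_div_iff₀ (by positivity)]
  linarith [h1]

end aux

lemma poisson_bound {f : ℝ → ℂ} (hf : ContDiff ℝ (⊤ : ℕ∞) f) (hs : HasCompactSupport f) {B : ℕ}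
    (hB : 2 ≤ B) :
    ‖(∑' j : ℤ, f j) - ∫ x, f x‖ ≤ kap * ∫ x, ‖iteratedDeriv B f x‖ := by
  set IB : ℝ := ∫ x, ‖iteratedDeriv B f x‖ with hIB
  have hIB0 : 0 ≤ IB := integral_nonneg (fun x => norm_nonneg _)
  -- the decay bound
  have decay : ∀ n : ℤ, ‖(if n = 0 then 0 else 𝓕 f n : ℂ)‖ ≤ IB * kapSeq n := by
    intro n
    by_cases hn : n = 0
    · simp [hn, kapSeq]
    · have h1 : ‖𝓕 f (n : ℝ)‖ ≤ IB / (2 * π * |(n:ℝ)|) ^ B :=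
        fourier_decay hf hs B (by exact_mod_cast hn)
      have hn1 : (1:ℝ) ≤ |(n:ℝ)| := by
        rw [← Int.cast_abs]
        exact_mod_cast Int.one_le_abs (by exact_mod_cast hn)
      have h2 : |(n:ℝ)| ^ 2 ≤ (2 * π * |(n:ℝ)|) ^ B := by
        calc |(n:ℝ)| ^ 2 ≤ |(n:ℝ)| ^ B := pow_le_pow_right₀ hn1 hB
          _ ≤ (2 * π * |(n:ℝ)|) ^ B := by
              apply pow_le_pow_left₀ (abs_nonneg _)
              nlinarith [Real.pi_gt_three, abs_nonneg ((n:ℝ))]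
      have h3 : IB / (2 * π * |(n:ℝ)|) ^ B ≤ IB / |(n:ℝ)| ^ 2 := by
        apply div_le_div_of_nonneg_left hIB0 (by positivity) h2
      simp only [hn, if_false, kapSeq]
      calc ‖𝓕 f (n:ℝ)‖ ≤ IB / |(n:ℝ)| ^ 2 := h1.trans h3
        _ = IB * (1 / (n:ℝ)^2) := by rw [sq_abs]; ring
  have hsummaj : Summable (fun n : ℤ => IB * kapSeq n) := kapSeq_summable.mul_left IB
  have hsum𝓕 : Summable (fun n : ℤ => 𝓕 f n) := by
    apply Summable.of_norm_bounded
      (g := fun n : ℤ => IB * kapSeq n + (if n = 0 then ‖𝓕 f (0:ℤ)‖ else 0))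
      (hsummaj.add (summable_of_ne_finset_zero (s := {0}) (by intro b hb; simp at hb; simp [hb])))
    intro n
    by_cases hn : n = 0
    · simp [hn, kapSeq]
    · have := decay n
      simp only [hn, if_false] at this ⊢
      simpa using this
  -- support bound
  obtain ⟨S₀, hSsub₀⟩ := hs.isBounded.subset_closedBall 0
  set S : ℝ := max S₀ 0 with hSdef
  have hSsub : tsupport f ⊆ Icc (-S) S := by
    intro x hx
    have := hSsub₀ hx
    rw [Real.closedBall_eq_Icc] at this
    simp only [zero_sub, zero_add] at this
    exact ⟨le_trans (by simp [hSdef]) this.1, this.2.trans (le_max_left _ _)⟩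
  -- Poisson summation hypotheses
  set fc : C(ℝ, ℂ) := ⟨f, hf.continuous⟩ with hfc
  have h_norm : ∀ K : TopologicalSpace.Compacts ℝ,
      Summable fun n : ℤ => ‖(fc.comp (ContinuousMap.addRight (n : ℝ))).restrict K‖ := by
    intro K
    obtain ⟨R₀, hR₀⟩ := K.isCompact.isBounded.subset_closedBall 0
    set R : ℝ := max R₀ 0 with hRdef
    have hRsub : (K : Set ℝ) ⊆ Icc (-R) R := by
      intro x hx
      have := hR₀ hx
      rw [Real.closedBall_eq_Icc] at this
      simp only [zero_sub, zero_add] at this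
      exact ⟨le_trans (by simp [hRdef]) this.1, this.2.trans (le_max_left _ _)⟩
    apply summable_of_ne_finset_zero (s := Finset.Icc (-⌈R + S⌉ - 1) (⌈R + S⌉ + 1))
    intro n hn
    simp only [Finset.mem_Icc, not_and_or, not_le] at hn
    have hnbig : ∀ x ∈ (K : Set ℝ), f (x + n) = 0 := by
      intro x hx
      apply image_eq_zero_of_notMem_tsupport
      intro hmem
      have h1 := hSsub hmem
      have h2 := hRsub hx
      simp only [mem_Icc] at h1 h2
      have hceil : (R + S : ℝ) ≤ ⌈R + S⌉ := Int.le_ceil _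
      rcases hn with hn | hn
      · have h3 : (n : ℝ) + 1 ≤ (-⌈R+S⌉ - 1 : ℤ) := by exact_mod_cast Int.lt_iff_add_one_le.mp hn
        push_cast at h3
        have : (n : ℝ) < -(R + S) := by linarith
        linarith [h1.1, h2.2]
      · have h3 : ((⌈R+S⌉ + 1 : ℤ) : ℝ) + 1 ≤ (n : ℝ) := by
          exact_mod_cast Int.lt_iff_add_one_le.mp hn
        push_cast at h3
        have : (R + S : ℝ) < n := by linarith
        linarith [h1.2, h2.1]
    have hzero : (fc.comp (ContinuousMap.addRight (n : ℝ))).restrict K = 0 := by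
      ext x
      exact hnbig x x.2
    rw [hzero, norm_zero]
  have poisson := Real.tsum_eq_tsum_fourier (f := fc) h_norm hsum𝓕 0
  have hL : ∑' n : ℤ, fc (0 + (n:ℝ)) = ∑' j : ℤ, f (j : ℝ) := by
    congr 1; funext n; simp [fc]
  have hfour : ∀ n : ℤ, (fourier n ((0:ℝ) : UnitAddCircle) : ℂ) = 1 := by
    intro n
    have : ((0:ℝ) : UnitAddCircle) = (0 : UnitAddCircle) := by norm_num
    rw [this, fourier_eval_zero]
  have hR2 : ∑' n : ℤ, 𝓕 (fc : ℝ → ℂ) n * (fourier n ((0:ℝ) : UnitAddCircle) : ℂ) = ∑' n : ℤ, 𝓕 f n := by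
    congr 1; funext n; rw [hfour n, mul_one]; rfl
  rw [hL, hR2] at poisson
  have hF0 : 𝓕 f (0:ℝ) = ∫ x, f x := by
    rw [Real.fourier_real_eq]
    simp
  have split := hsum𝓕.tsum_eq_add_tsum_ite 0
  have hnormsum : Summable (fun n : ℤ => ‖(if n = 0 then 0 else 𝓕 f n : ℂ)‖) :=
    Summable.of_nonneg_of_le (fun n => norm_nonneg _) decay hsummaj
  have key : (∑' j : ℤ, f (j:ℝ)) - ∫ x, f x = ∑' n : ℤ, (if n = 0 then 0 else 𝓕 f n : ℂ) := by
    rw [poisson, split]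
    push_cast [hF0]
    ring
  rw [key]
  calc ‖∑' n : ℤ, (if n = 0 then 0 else 𝓕 f n : ℂ)‖
      ≤ ∑' n : ℤ, ‖(if n = 0 then 0 else 𝓕 f n : ℂ)‖ := norm_tsum_le_tsum_norm hnormsum
    _ ≤ ∑' n : ℤ, IB * kapSeq n := Summable.tsum_le_tsum decay hnormsum hsummaj
    _ = IB * kap := tsum_mul_left
    _ = kap * IB := mul_comm _ _

lemma affine_bound {w : ℝ → ℂ} (hw : ContDiff ℝ (⊤ : ℕ∞) w)
    (hsupp : ∀ x : ℝ, x ∉ Set.Icc (1 : ℝ) 10 → w x = 0)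
    {s t : ℝ} (hs : 0 < s) {B : ℕ} (hB : 2 ≤ B) {D : ℝ} (hD : 0 ≤ D)
    (hbound : ∀ x, ‖iteratedDeriv B w x‖ ≤ D) :
    ‖(∑' j : ℤ, w (s * (j:ℝ) + t)) - (|s⁻¹| • ∫ x, w x : ℂ)‖ ≤ kap * ((s ^ B * D) * (9 / s)) := by
  set g : ℝ → ℂ := fun x => w (s * x + t) with hgdef
  have hwB0 : ∀ u : ℝ, u ∉ Icc (1:ℝ) 10 → iteratedDeriv B w u = 0 := by
    intro u hu
    have heq : Set.EqOn w (fun _ => (0:ℂ)) (Icc (1:ℝ) 10)ᶜ := fun z hz => hsupp z hz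
    have h0 : iteratedDeriv B (fun _ : ℝ => (0:ℂ)) = fun _ => 0 := by
      have : iteratedDeriv B (fun _ : ℝ => (0:ℂ)) = deriv^[B] (fun _ => (0:ℂ)) := by
        funext x; rw [iteratedDeriv_eq_iterate]
      rw [this, Function.iterate_fixed (by simp : deriv (fun _ : ℝ => (0:ℂ)) = fun _ => 0)]
    have := heq.iteratedDeriv_of_isOpen (isOpen_compl_iff.mpr isClosed_Icc) B hu
    rw [h0] at this
    exact this
  have hg : ContDiff ℝ (⊤ : ℕ∞) g :=
    hw.comp ((contDiff_const.mul contDiff_id).add contDiff_const)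
  set a : ℝ := (1 - t) / s with hadef
  set b : ℝ := (10 - t) / s with hbdef
  have hmem : ∀ x : ℝ, x ∉ Icc a b → s * x + t ∉ Icc (1:ℝ) 10 := by
    intro x hx hmem
    simp only [mem_Icc] at hmem
    apply hx
    constructor
    · rw [hadef, div_le_iff₀ hs]; linarith [hmem.1]
    · rw [hbdef, le_div_iff₀ hs]; linarith [hmem.2]
  have hgsupp : HasCompactSupport g := by
    apply HasCompactSupport.intro (isCompact_Icc (a := a) (b := b))
    intro x hx
    exact hsupp _ (hmem x hx)
  have hab : a ≤ b := by
    rw [hadef, hbdef]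
    exact (div_le_div_iff_of_pos_right hs).mpr (by linarith)
  have hder : iteratedDeriv B g = fun x => (s ^ B : ℝ) • iteratedDeriv B w (s * x + t) := by
    have e1 : iteratedDeriv B g = iteratedDeriv B (fun x => (fun z => w (z + t)) (s * x)) := rfl
    have hcd : ContDiff ℝ B (fun z : ℝ => w (z + t)) :=
      (hw.of_le (by exact_mod_cast le_top)).comp (contDiff_id.add contDiff_const)
    rw [e1, iteratedDeriv_comp_const_smul hcd s]
    simp only [iteratedDeriv_comp_add_const]
  have hint : ∫ x, g x = (|s⁻¹| : ℝ) • ∫ x, w x := by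
    have e : ∫ x, g x = ∫ x, (fun z => w (z + t)) (s * x) := rfl
    rw [e, Measure.integral_comp_mul_left (fun z => w (z + t)) s,
      integral_add_right_eq_self (fun z => w z) t]
  have hψ0 : ∀ x : ℝ, x ∉ Icc a b → ‖iteratedDeriv B g x‖ = 0 := by
    intro x hx
    rw [hder]
    simp [hwB0 _ (hmem x hx)]
  have hψle : ∀ x ∈ Icc a b, ‖‖iteratedDeriv B g x‖‖ ≤ s ^ B * D := by
    intro x _
    rw [norm_norm, hder]
    simp only [norm_smul, Real.norm_eq_abs, abs_of_nonneg (pow_nonneg hs.le B)]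
    exact mul_le_mul_of_nonneg_left (hbound _) (pow_nonneg hs.le B)
  have hIBle : (∫ x, ‖iteratedDeriv B g x‖) ≤ (s ^ B * D) * (9 / s) := by
    have e : (∫ x, ‖iteratedDeriv B g x‖) = ∫ x in Icc a b, ‖iteratedDeriv B g x‖ :=
      (setIntegral_eq_integral_of_forall_compl_eq_zero hψ0).symm
    rw [e]
    have h2 := norm_setIntegral_le_of_norm_le_const (show volume (Icc a b) < ⊤ from measure_Icc_lt_top) hψle
    have h3 : (volume (Icc a b)).toReal = 9 / s := by
      rw [Real.volume_Icc, ENNReal.toReal_ofReal (by linarith : (0:ℝ) ≤ b - a)]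
      rw [hbdef, hadef]
      field_simp
      ring
    calc ∫ x in Icc a b, ‖iteratedDeriv B g x‖
        ≤ ‖∫ x in Icc a b, ‖iteratedDeriv B g x‖‖ := by
          rw [Real.norm_eq_abs]; exact le_abs_self _
      _ ≤ (s ^ B * D) * (volume (Icc a b)).toReal := h2
      _ = (s ^ B * D) * (9 / s) := by rw [h3]
  have main := poisson_bound hg hgsupp hB
  rw [hint] at main
  calc ‖(∑' j : ℤ, w (s * (j:ℝ) + t)) - (|s⁻¹| • ∫ x, w x : ℂ)‖
      = ‖(∑' j : ℤ, g (j:ℝ)) - ((|s⁻¹| : ℝ) • ∫ x, w x : ℂ)‖ := rfl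
    _ ≤ kap * ∫ x, ‖iteratedDeriv B g x‖ := main
    _ ≤ kap * ((s ^ B * D) * (9 / s)) := mul_le_mul_of_nonneg_left hIBle kap_nonneg

/-- Smooth counting of integers in the joint congruence class
`h ∣ m`, `m ≡ y (mod q)`, compared with its density in `ℤ/hqℤ`:
in the range `h ≤ M^{1−ε}/(Aq)` the error is `O_{ε,k}(M^{−k})`. -/
theorem stmt_10 (ε : ℝ) (hε : 0 < ε) (k : ℕ) (c : ℕ → ℝ) (hc : ∀ B, 0 < c B) :
    ∃ C : ℝ, 0 < C ∧
      ∀ (M A h q y : ℕ), 0 < M → 0 < A → 0 < h → 0 < q → 0 < y →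
        (h : ℝ) ≤ (M : ℝ) ^ (1 - ε) / ((A : ℝ) * (q : ℝ)) →
        ∀ (w : ℝ → ℂ), ContDiff ℝ (⊤ : ℕ∞) w →
          (∀ x : ℝ, x ∉ Set.Icc (1 : ℝ) 10 → w x = 0) →
          (∀ (B : ℕ) (x : ℝ), ‖iteratedDeriv B w x‖ ≤ c B * (A : ℝ) ^ B) →
          ‖∑' m : ℤ,
              w ((m : ℝ) / (M : ℝ)) *
                ((if ((h : ℤ) ∣ m ∧ (q : ℤ) ∣ (m - (y : ℤ))) then (1 : ℂ) else 0) -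
                  (((Finset.range (h * q)).filter
                      (fun n => h ∣ n ∧ n % q = y % q)).card : ℂ) / ((h * q : ℕ) : ℂ))‖
            ≤ C * (M : ℝ) ^ (-(k : ℝ)) := by
  classical
  set B : ℕ := max 2 ⌈((k:ℝ) + 1) / ε⌉₊ with hBdef
  have hB2 : 2 ≤ B := le_max_left _ _
  have hεB : (k:ℝ) + 1 ≤ ε * B := by
    have h1 : ((k:ℝ)+1)/ε ≤ (⌈((k:ℝ) + 1) / ε⌉₊ : ℝ) := Nat.le_ceil _
    have h2 : ((⌈((k:ℝ) + 1) / ε⌉₊ : ℕ) : ℝ) ≤ (B:ℝ) := by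
      rw [hBdef]; exact_mod_cast le_max_right 2 ⌈((k:ℝ) + 1) / ε⌉₊
    calc (k:ℝ)+1 = (((k:ℝ)+1)/ε) * ε := by field_simp
      _ ≤ (B:ℝ) * ε := mul_le_mul_of_nonneg_right (h1.trans h2) hε.le
      _ = ε * B := mul_comm _ _
  have hCpos : (0:ℝ) < 18 * kap * c B + 1 := by
    have h1 : (0:ℝ) ≤ 18 * kap * c B :=
      mul_nonneg (mul_nonneg (by norm_num) kap_nonneg) (hc B).le
    linarith
  refine ⟨18 * kap * c B + 1, hCpos, ?_⟩
  intro M A h q y hM hA hh hq hy hrange w hw hwsupp hwbound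
  set N : ℕ := h * q with hNdef
  have hN : 0 < N := Nat.mul_pos hh hq
  haveI : NeZero N := ⟨hN.ne'⟩
  have hMR : (0:ℝ) < M := by exact_mod_cast hM
  have hNR : (0:ℝ) < N := by exact_mod_cast hN
  have hAR : (0:ℝ) < A := by exact_mod_cast hA
  set s : ℝ := (N:ℝ) / M with hsdef
  have hs : 0 < s := div_pos hNR hMR
  set Scard : ℕ := ((Finset.range N).filter (fun n => h ∣ n ∧ n % q = y % q)).card with hScard
  set ρ : ℂ := (Scard : ℂ) / ((N : ℕ) : ℂ) with hρdef
  set F : ℤ → ℂ := fun m => w ((m : ℝ) / (M : ℝ)) *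
      ((if ((h : ℤ) ∣ m ∧ (q : ℤ) ∣ (m - (y : ℤ))) then (1 : ℂ) else 0) - ρ) with hF
  -- summability
  have hFvanish : ∀ m : ℤ, m ∉ Finset.Icc (M:ℤ) (10*M) → F m = 0 := by
    intro m hm
    simp only [Finset.mem_Icc, not_and_or, not_le] at hm
    have hw0 : w ((m:ℝ)/M) = 0 := by
      apply hwsupp
      intro hmem
      simp only [mem_Icc] at hmem
      rcases hm with hm | hm
      · have h1 : (m:ℝ) < M := by exact_mod_cast hm
        have h2 := hmem.1
        rw [le_div_iff₀ hMR] at h2; linarith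
      · have h1 : (10*(M:ℝ)) < m := by exact_mod_cast hm
        have h2 := hmem.2
        rw [div_le_iff₀ hMR] at h2; linarith
    simp [hF, hw0]
  have hFsum : Summable F := summable_of_ne_finset_zero hFvanish
  -- residue data
  set g : ℕ → ℝ → ℂ := fun r x => w (s * x + (r:ℝ)/M) with hgdef
  set T : ℕ → ℂ := fun r => ∑' j : ℤ, g r j with hT
  set χ : ℕ → ℂ := fun r => if h ∣ r ∧ r % q = y % q then (1:ℂ) else 0 with hχ
  set J : ℂ := |s⁻¹| • ∫ x, w x with hJ
  have keyF : ∀ (r : ℕ), r < N → ∀ j : ℤ, F (j * (N:ℤ) + (r:ℤ)) = g r (j:ℝ) * (χ r - ρ) := by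
    intro r _ j
    have harg : ((j * (N:ℤ) + (r:ℤ) : ℤ) : ℝ) / (M:ℝ) = s * (j:ℝ) + (r:ℝ) / M := by
      rw [hsdef]
      push_cast
      field_simp
    have hdvd1 : ((h:ℤ) ∣ j * (N:ℤ) + (r:ℤ)) ↔ ((h:ℤ) ∣ (r:ℤ)) := by
      refine dvd_add_right ⟨j * q, by rw [hNdef]; push_cast; ring⟩
    have hdvd2 : ((q:ℤ) ∣ j * (N:ℤ) + (r:ℤ) - (y:ℤ)) ↔ ((q:ℤ) ∣ (r:ℤ) - (y:ℤ)) := by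
      have e : j * (N:ℤ) + (r:ℤ) - (y:ℤ) = j * (N:ℤ) + ((r:ℤ) - (y:ℤ)) := by ring
      rw [e]
      refine dvd_add_right ⟨j * h, by rw [hNdef]; push_cast; ring⟩
    have hmod : ((q:ℤ) ∣ (r:ℤ) - (y:ℤ)) ↔ (r % q = y % q) := by
      rw [← Int.modEq_iff_dvd]
      constructor
      · intro hyr
        have : (y:ℤ) % q = (r:ℤ) % q := hyr
        have h2 : ((y % q : ℕ) : ℤ) = ((r % q : ℕ) : ℤ) := by push_cast; exact this
        exact (Nat.cast_injective h2).symm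
      · intro hyr
        show (y:ℤ) % q = (r:ℤ) % q
        have : ((y % q : ℕ) : ℤ) = ((r % q : ℕ) : ℤ) := by exact_mod_cast hyr.symm
        push_cast at this
        exact this
    have hcond : (((h:ℤ) ∣ j * (N:ℤ) + (r:ℤ)) ∧ ((q:ℤ) ∣ j * (N:ℤ) + (r:ℤ) - (y:ℤ)))
        ↔ (h ∣ r ∧ r % q = y % q) := by
      rw [hdvd1, hdvd2, hmod, Int.natCast_dvd_natCast]
    simp only [hF, hgdef, hχ]
    rw [harg, if_congr hcond rfl rfl]
  -- regrouping via divModEquiv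
  have hinj : ∀ r : ℕ, Function.Injective (fun j : ℤ => j * (N:ℤ) + (r:ℤ)) := by
    intro r a b hab
    simp only [add_left_inj] at hab
    exact mul_right_cancel₀ (by exact_mod_cast hN.ne') hab
  have hsum_r : ∀ r : ℕ, r < N → Summable (fun j : ℤ => g r (j:ℝ) * (χ r - ρ)) := by
    intro r hr
    have e : (fun j : ℤ => g r (j:ℝ) * (χ r - ρ)) = fun j : ℤ => F (j * (N:ℤ) + (r:ℤ)) := by
      funext j; rw [keyF r hr j]
    rw [e]
    exact hFsum.comp_injective (hinj r)
  have hfin : ∀ p : ℤ × Fin N, F ((Int.divModEquiv N).symm p) = g (p.2 : ℕ) (p.1:ℝ) * (χ (p.2 : ℕ) - ρ) := by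
    rintro ⟨j, r⟩
    have e : (Int.divModEquiv N).symm (j, r) = j * (N:ℤ) + ((r : ℕ) : ℤ) := by
      simp [Int.divModEquiv]
    rw [e]
    exact keyF (r : ℕ) r.2 j
  have regroup : (∑' m : ℤ, F m) = ∑ r ∈ Finset.range N, (χ r - ρ) * T r := by
    have e0 : (∑' m : ℤ, F m) = ∑' p : ℤ × Fin N, F ((Int.divModEquiv N).symm p) :=
      ((Int.divModEquiv N).symm.tsum_eq F).symm
    have e1 : (∑' p : ℤ × Fin N, F ((Int.divModEquiv N).symm p))
        = ∑' p : ℤ × Fin N, g (p.2 : ℕ) (p.1:ℝ) * (χ (p.2 : ℕ) - ρ) := tsum_congr hfin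
    have hsumP : Summable (fun p : ℤ × Fin N => g (p.2 : ℕ) (p.1:ℝ) * (χ (p.2 : ℕ) - ρ)) := by
      have := ((Int.divModEquiv N).symm.summable_iff.mpr hFsum)
      exact this.congr hfin
    have e2 : (∑' p : ℤ × Fin N, g (p.2 : ℕ) (p.1:ℝ) * (χ (p.2 : ℕ) - ρ))
        = ∑' j : ℤ, ∑' r : Fin N, g (r : ℕ) (j:ℝ) * (χ (r : ℕ) - ρ) :=
      Summable.tsum_prod' hsumP (fun _ => Summable.of_finite)
    have e3 : (∑' j : ℤ, ∑' r : Fin N, g (r : ℕ) (j:ℝ) * (χ (r : ℕ) - ρ))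
        = ∑' j : ℤ, ∑ r : Fin N, g (r : ℕ) (j:ℝ) * (χ (r : ℕ) - ρ) := by
      congr 1; funext j; exact tsum_fintype _
    have e4 : (∑' j : ℤ, ∑ r : Fin N, g (r : ℕ) (j:ℝ) * (χ (r : ℕ) - ρ))
        = ∑ r : Fin N, ∑' j : ℤ, g (r : ℕ) (j:ℝ) * (χ (r : ℕ) - ρ) :=
      Summable.tsum_finsetSum (fun r _ => hsum_r (r : ℕ) r.2)
    have e5 : (∑ r : Fin N, ∑' j : ℤ, g (r : ℕ) (j:ℝ) * (χ (r : ℕ) - ρ))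
        = ∑ r ∈ Finset.range N, ∑' j : ℤ, g r (j:ℝ) * (χ r - ρ) :=
      Fin.sum_univ_eq_sum_range (fun r => ∑' j : ℤ, g r (j:ℝ) * (χ r - ρ)) N
    have e6 : ∀ r : ℕ, (∑' j : ℤ, g r (j:ℝ) * (χ r - ρ)) = (χ r - ρ) * T r := by
      intro r
      rw [tsum_mul_right, hT, mul_comm]
    rw [e0, e1, e2, e3, e4, e5]
    exact Finset.sum_congr rfl (fun r _ => e6 r)
  -- cancellation of the main term
  have hcard : (∑ r ∈ Finset.range N, χ r) = (Scard : ℂ) := by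
    rw [hχ, hScard, Finset.sum_boole]
  have hcancel : (∑ r ∈ Finset.range N, (χ r - ρ)) = 0 := by
    rw [Finset.sum_sub_distrib, hcard, Finset.sum_const, Finset.card_range, nsmul_eq_mul, hρdef]
    have hNne : ((N:ℕ) : ℂ) ≠ 0 := by exact_mod_cast hN.ne'
    field_simp
    ring
  have regroup2 : (∑' m : ℤ, F m) = ∑ r ∈ Finset.range N, (χ r - ρ) * (T r - J) := by
    rw [regroup]
    have e : ∑ r ∈ Finset.range N, (χ r - ρ) * (T r - J)
        = (∑ r ∈ Finset.range N, (χ r - ρ) * T r)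
          - (∑ r ∈ Finset.range N, (χ r - ρ)) * J := by
      rw [Finset.sum_mul, ← Finset.sum_sub_distrib]
      exact Finset.sum_congr rfl (fun r _ => by ring)
    rw [e, hcancel, zero_mul, sub_zero]
  -- bounds
  have hχρ : ∀ r : ℕ, ‖χ r - ρ‖ ≤ 2 := by
    intro r
    have h1 : ‖χ r‖ ≤ 1 := by
      rw [hχ]; dsimp only; split <;> simp
    have h2 : ‖ρ‖ ≤ 1 := by
      rw [hρdef, norm_div]
      have hle : (Scard : ℝ) ≤ (N : ℝ) := by
        exact_mod_cast (Finset.card_filter_le _ _).trans_eq (Finset.card_range N)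
      have e1 : ‖(Scard : ℂ)‖ = (Scard : ℝ) := by
        rw [Complex.norm_natCast]
      have e2 : ‖((N:ℕ) : ℂ)‖ = (N : ℝ) := by
        rw [Complex.norm_natCast]
      rw [e1, e2]
      exact div_le_one_of_le₀ hle hNR.le
    calc ‖χ r - ρ‖ ≤ ‖χ r‖ + ‖ρ‖ := norm_sub_le _ _
      _ ≤ 2 := by linarith
  have hD0 : (0:ℝ) ≤ c B * (A:ℝ) ^ B := mul_nonneg (hc B).le (by positivity)
  have hTJ : ∀ r : ℕ, ‖T r - J‖ ≤ kap * ((s ^ B * (c B * (A:ℝ) ^ B)) * (9 / s)) := by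
    intro r
    rw [hT, hJ]
    exact affine_bound hw hwsupp hs hB2 hD0 (hwbound B)
  -- put it together
  have main : ‖∑' m : ℤ, F m‖
      ≤ (N:ℝ) * (2 * (kap * ((s ^ B * (c B * (A:ℝ) ^ B)) * (9 / s)))) := by
    rw [regroup2]
    calc ‖∑ r ∈ Finset.range N, (χ r - ρ) * (T r - J)‖
        ≤ ∑ r ∈ Finset.range N, ‖(χ r - ρ) * (T r - J)‖ := norm_sum_le _ _
      _ ≤ ∑ r ∈ Finset.range N, 2 * (kap * ((s ^ B * (c B * (A:ℝ) ^ B)) * (9 / s))) := by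
          apply Finset.sum_le_sum
          intro r _
          rw [norm_mul]
          exact mul_le_mul (hχρ r) (hTJ r) (norm_nonneg _)
            (by norm_num)
      _ = (N:ℝ) * (2 * (kap * ((s ^ B * (c B * (A:ℝ) ^ B)) * (9 / s)))) := by
          rw [Finset.sum_const, Finset.card_range, nsmul_eq_mul]
  have halg : (N:ℝ) * (2 * (kap * ((s ^ B * (c B * (A:ℝ) ^ B)) * (9 / s))))
      = 18 * kap * c B * ((M:ℝ) * (s * (A:ℝ)) ^ B) := by
    have hMs : (N:ℝ) = (M:ℝ) * s := by rw [hsdef]; field_simp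
    rw [hMs, mul_pow]
    field_simp
    ring
  -- rpow estimates
  have hqR : (0:ℝ) < q := by exact_mod_cast hq
  have hsA : s * (A:ℝ) ≤ (M:ℝ) ^ (-ε) := by
    have hAq : (0:ℝ) < (A:ℝ) * q := by positivity
    rw [le_div_iff₀ hAq] at hrange
    have h2 : s * (A:ℝ) = ((h:ℝ) * ((A:ℝ) * q)) / M := by
      rw [hsdef, hNdef]; push_cast; ring
    rw [h2, div_le_iff₀ hMR]
    calc (h:ℝ) * ((A:ℝ)*q) ≤ (M:ℝ)^(1-ε) := hrange
      _ = (M:ℝ)^(-ε) * M := by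
          rw [show (1:ℝ) - ε = -ε + 1 by ring, Real.rpow_add hMR, Real.rpow_one]
  have hsApow : (s*(A:ℝ))^B ≤ (M:ℝ)^(-(ε*(B:ℝ))) := by
    calc (s*(A:ℝ))^B ≤ ((M:ℝ)^(-ε))^B := pow_le_pow_left₀ (by positivity) hsA B
      _ = (M:ℝ)^(-ε*(B:ℝ)) := by
          rw [← Real.rpow_natCast ((M:ℝ)^(-ε)) B, ← Real.rpow_mul hMR.le]
      _ = (M:ℝ)^(-(ε*(B:ℝ))) := by ring_nf
  have hM1 : (1:ℝ) ≤ M := by exact_mod_cast hM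
  have hstep : (M:ℝ) * (M:ℝ)^(-(ε*(B:ℝ))) ≤ (M:ℝ)^(-(k:ℝ)) := by
    have e : (M:ℝ) * (M:ℝ)^(-(ε*(B:ℝ))) = (M:ℝ)^(1-ε*(B:ℝ)) := by
      rw [show (1:ℝ) - ε*(B:ℝ) = -(ε*(B:ℝ)) + 1 by ring, Real.rpow_add hMR, Real.rpow_one]
      ring
    rw [e]
    exact Real.rpow_le_rpow_of_exponent_le hM1 (by linarith [hεB])
  have hnonneg : (0:ℝ) ≤ 18 * kap * c B :=
    mul_nonneg (mul_nonneg (by norm_num) kap_nonneg) (hc B).le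
  calc ‖∑' m : ℤ, F m‖
      ≤ (N:ℝ) * (2 * (kap * ((s ^ B * (c B * (A:ℝ) ^ B)) * (9 / s)))) := main
    _ = 18 * kap * c B * ((M:ℝ) * (s*(A:ℝ))^B) := halg
    _ ≤ 18 * kap * c B * ((M:ℝ) * (M:ℝ)^(-(ε*(B:ℝ)))) := by
        apply mul_le_mul_of_nonneg_left _ hnonneg
        exact mul_le_mul_of_nonneg_left hsApow hMR.le
    _ ≤ 18 * kap * c B * ((M:ℝ)^(-(k:ℝ))) := mul_le_mul_of_nonneg_left hstep hnonneg
    _ ≤ (18 * kap * c B + 1) * (M:ℝ)^(-(k:ℝ)) :=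
        mul_le_mul_of_nonneg_right (by linarith) (Real.rpow_nonneg hMR.le _)
end
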